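/- arXiv:2007.09232 — 2 statements merged into one kernel-verified Lean document; each statement's English description precedes it below -/
import Mathlib

section
/- Suppose cos(α+θ) ≠ 0, cos(α+2θ) ≠ 0, cos(α+3θ) ≠ 0, sin(α+3θ) ≠ 0, and tan(α+θ) ≠ tan(α+3θ). Then x_FP = ℓ·(tan(α+θ) − tan(α+2θ))/(tan(α+θ) − tan(α+3θ)) is the UNIQUE fixed point of the three-bounce return map F; that is, for every real x, F(x) = x implies x = x_FP. -/
/- The reduction formulas `tan (π - y) = -tan y`, `cot (3π/2 - y) = tan y` and
`tan (3π/2 - y) = (tan y)⁻¹` hold everywhere, junk values at the poles included, so the return map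
is the affine map `x ↦ (ℓ tan (α + 2θ) - (ℓ - x) tan (α + θ)) / tan (α + 3θ)`; its slope
`tan (α + θ) / tan (α + 3θ)` differs from 1, so it has exactly one fixed point. -/

open Real

/-- The three-bounce return map of the bouncing robot. -/
noncomputable def bounceMap (ℓ α θ x : ℝ) : ℝ :=
  ((ℓ - x) * Real.tan (π - θ - α) + ℓ * Real.cot (3 * π / 2 - 2 * θ - α)) *
    Real.tan (3 * π / 2 - α - 3 * θ)

namespace Real

theorem tan_three_pi_div_two_sub (x : ℝ) : tan (3 * π / 2 - x) = (tan x)⁻¹ := by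
  rw [show 3 * π / 2 - x = π / 2 - x + π by ring, tan_add_pi, tan_pi_div_two_sub]

theorem cot_three_pi_div_two_sub (x : ℝ) : cot (3 * π / 2 - x) = tan x := by
  rw [← tan_inv_eq_cot, tan_three_pi_div_two_sub, inv_inv]

theorem tan_ne_zero_of_sin_ne_zero_of_cos_ne_zero {x : ℝ} (hs : sin x ≠ 0) (hc : cos x ≠ 0) :
    tan x ≠ 0 := by
  rw [tan_eq_sin_div_cos]
  exact div_ne_zero hs hc

end Real

theorem bounceMap_eq (ℓ α θ x : ℝ) :
    bounceMap ℓ α θ x =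
      (ℓ * tan (α + 2 * θ) - (ℓ - x) * tan (α + θ)) / tan (α + 3 * θ) := by
  rw [bounceMap, show π - θ - α = π - (α + θ) by ring, tan_pi_sub,
    show 3 * π / 2 - 2 * θ - α = 3 * π / 2 - (α + 2 * θ) by ring, cot_three_pi_div_two_sub,
    show 3 * π / 2 - α - 3 * θ = 3 * π / 2 - (α + 3 * θ) by ring, tan_three_pi_div_two_sub]
  ring

theorem bounceMap_fixed_point_unique_general (ℓ α θ : ℝ)
    (h3 : Real.cos (α + 3 * θ) ≠ 0) (h4 : Real.sin (α + 3 * θ) ≠ 0)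
    (h5 : Real.tan (α + θ) ≠ Real.tan (α + 3 * θ)) :
    ∀ x : ℝ, bounceMap ℓ α θ x = x →
      x = ℓ * (Real.tan (α + θ) - Real.tan (α + 2 * θ)) /
            (Real.tan (α + θ) - Real.tan (α + 3 * θ)) := by
  intro x hx
  rw [bounceMap_eq, div_eq_iff (tan_ne_zero_of_sin_ne_zero_of_cos_ne_zero h4 h3)] at hx
  rw [eq_div_iff (sub_ne_zero.mpr h5)]
  linear_combination hx

theorem bounceMap_fixed_point_unique (ℓ α θ : ℝ)
    (h1 : Real.cos (α + θ) ≠ 0) (h2 : Real.cos (α + 2 * θ) ≠ 0)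
    (h3 : Real.cos (α + 3 * θ) ≠ 0) (h4 : Real.sin (α + 3 * θ) ≠ 0)
    (h5 : Real.tan (α + θ) ≠ Real.tan (α + 3 * θ)) :
    ∀ x : ℝ, bounceMap ℓ α θ x = x →
      x = ℓ * (Real.tan (α + θ) - Real.tan (α + 2 * θ)) /
            (Real.tan (α + θ) - Real.tan (α + 3 * θ)) :=
  bounceMap_fixed_point_unique_general ℓ α θ h3 h4 h5
end

section
/- Specializing the rotation angle to θ = π/3 (the equiangular-triangle case): if sin α ≠ 0, cos α ≠ 0, cos(α+π/3) ≠ 0, cos(α+2π/3) ≠ 0, and tan(α+π/3) ≠ tan α, then the three-bounce return map F with θ = π/3 has the fixed point x_FP = ℓ·(tan(α+π/3) − tan(α+2π/3))/(tan(α+π/3) − tan α), where the denominator uses the identity tan(α+π) = tan α. -/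
/-
For θ = π/3 the return map is affine in x, with coefficients tan(α + π/3), tan(α + 2π/3)
and 1 / tan α; solving the linear fixed-point equation gives x_FP.
-/

open Real

theorem Real.cot_pi_div_two_sub (x : ℝ) : cot (π / 2 - x) = tan x := by
  rw [cot_eq_cos_div_sin, cos_pi_div_two_sub, sin_pi_div_two_sub, tan_eq_sin_div_cos]

theorem bounceMap_pi_div_three (ℓ α x : ℝ) :
    bounceMap ℓ α (π / 3) x =
      (ℓ * tan (α + 2 * π / 3) - (ℓ - x) * tan (α + π / 3)) / tan α := by
  have first_bounce : tan (π - π / 3 - α) = -tan (α + π / 3) := by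
    rw [← tan_pi_sub]; ring_nf
  have second_bounce : cot (3 * π / 2 - 2 * (π / 3) - α) = tan (α + 2 * π / 3) := by
    rw [show 3 * π / 2 - 2 * (π / 3) - α = π / 2 - (α + 2 * π / 3 - π) by ring,
      cot_pi_div_two_sub, tan_sub_pi]
  have third_bounce : tan (3 * π / 2 - α - 3 * (π / 3)) = (tan α)⁻¹ := by
    rw [← tan_pi_div_two_sub]; ring_nf
  rw [bounceMap, first_bounce, second_bounce, third_bounce]
  ring

theorem affine_fixed_point {ℓ a b c : ℝ} (hc : c ≠ 0) (hac : a ≠ c) :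
    (ℓ * b - (ℓ - ℓ * (a - b) / (a - c)) * a) / c = ℓ * (a - b) / (a - c) := by
  field_simp [sub_ne_zero.mpr hac]
  ring

theorem bounceMap_fixed_point_equiangular_general (ℓ α : ℝ)
    (h0 : Real.sin α ≠ 0) (h1 : Real.cos α ≠ 0)
    (h5 : Real.tan (α + π / 3) ≠ Real.tan α) :
    bounceMap ℓ α (π / 3)
        (ℓ * (Real.tan (α + π / 3) - Real.tan (α + 2 * π / 3)) /
          (Real.tan (α + π / 3) - Real.tan α)) =
      ℓ * (Real.tan (α + π / 3) - Real.tan (α + 2 * π / 3)) /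
        (Real.tan (α + π / 3) - Real.tan α) := by
  have htan : tan α ≠ 0 := by
    rw [tan_eq_sin_div_cos]
    exact div_ne_zero h0 h1
  rw [bounceMap_pi_div_three]
  exact affine_fixed_point htan h5

theorem bounceMap_fixed_point_equiangular (ℓ α : ℝ)
    (h0 : Real.sin α ≠ 0) (h1 : Real.cos α ≠ 0)
    (h2 : Real.cos (α + π / 3) ≠ 0) (h3 : Real.cos (α + 2 * π / 3) ≠ 0)
    (h5 : Real.tan (α + π / 3) ≠ Real.tan α) :
    bounceMap ℓ α (π / 3)
        (ℓ * (Real.tan (α + π / 3) - Real.tan (α + 2 * π / 3)) /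
          (Real.tan (α + π / 3) - Real.tan α)) =
      ℓ * (Real.tan (α + π / 3) - Real.tan (α + 2 * π / 3)) /
        (Real.tan (α + π / 3) - Real.tan α) :=
  bounceMap_fixed_point_equiangular_general ℓ α h0 h1 h5
end
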